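/- arXiv:2405.19316 — 7 statements merged into one kernel-verified Lean document; each statement's English description precedes it below -/
import Mathlib

section
/- Let Y be a finite set, let β > 0, let π_ref : Y → ℝ satisfy 0 < π_ref(y) for all y, and let (y₁ʷ, y₁ˡ), …, (yₙʷ, yₙˡ) be preference pairs such that the 2n responses y₁ʷ, y₁ˡ, …, yₙʷ, yₙˡ are pairwise distinct elements of Y. For a probability mass function π on Y that is positive on all 2n responses, define the DPO loss L(π) = ∑_{i=1}^n −log σ(β log(π(yᵢʷ)/π(yᵢˡ)) − β log(π_ref(yᵢʷ)/π_ref(yᵢˡ))), where σ is the logistic sigmoid. Then (i) L(π) > 0 for every such π, (ii) the infimum of L over all such π equals 0 and is not attained, and (iii) for every sequence (π_k) of such probability mass functions with L(π_k) → 0, the ratio π_k(yᵢʷ)/π_k(yᵢˡ) tends to +∞ for every i ∈ {1,…,n}. -/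
open Filter

/-- The logistic sigmoid function σ(x) = 1/(1+e^{−x}). -/
noncomputable def logisticSigmoid (x : ℝ) : ℝ := 1 / (1 + Real.exp (-x))

/-- The DPO loss over n mutually disjoint preference pairs with winners `yw`
and losers `yl`, reference policy `πref` and inverse temperature `β`. -/
noncomputable def dpoLoss {Y : Type*} [Fintype Y] {n : ℕ} (β : ℝ) (πref : Y → ℝ)
    (yw yl : Fin n → Y) (π : Y → ℝ) : ℝ :=
  ∑ i, -Real.log (logisticSigmoid
    (β * Real.log (π (yw i) / π (yl i)) - β * Real.log (πref (yw i) / πref (yl i))))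

/-- `π` is a probability mass function on `Y` which is positive on all the
responses appearing in the preference data. -/
def IsValidPolicy {Y : Type*} [Fintype Y] {n : ℕ} (yw yl : Fin n → Y) (π : Y → ℝ) : Prop :=
  (∀ y, 0 ≤ π y) ∧ (∑ y, π y = 1) ∧ (∀ i, 0 < π (yw i)) ∧ (∀ i, 0 < π (yl i))

open Topology

/-! If the responses of the pairs are disjoint, the `n` winner/loser ratios of a policy can be
chosen freely: putting mass proportional to `t` on every winner and to `1` on every loser makes
all of them equal to `t`. Each summand `-log σ(m) = log (1 + e^{-m})` of the loss is positive and
tends to `0` exactly when its margin `m` tends to `+∞`, i.e. exactly when the ratio does. -/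

lemma neg_log_logisticSigmoid (x : ℝ) :
    -Real.log (logisticSigmoid x) = Real.log (1 + Real.exp (-x)) := by
  rw [logisticSigmoid, one_div, Real.log_inv, neg_neg]

lemma neg_log_logisticSigmoid_pos (x : ℝ) : 0 < -Real.log (logisticSigmoid x) := by
  rw [neg_log_logisticSigmoid]
  exact Real.log_pos (lt_add_of_pos_right 1 (Real.exp_pos _))

lemma Real.tendsto_log_comp_nhds_zero_iff {α : Type*} {l : Filter α} {f : α → ℝ}
    (hf : ∀ a, 0 < f a) :
    Tendsto (fun a => Real.log (f a)) l (𝓝 0) ↔ Tendsto f l (𝓝 1) := by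
  constructor
  · intro h
    simpa [Function.comp_def, Real.exp_log (hf _)] using (Real.continuous_exp.tendsto 0).comp h
  · intro h
    simpa [Function.comp_def] using (Real.continuousAt_log one_ne_zero).tendsto.comp h

lemma Real.tendsto_log_comp_atTop_iff {α : Type*} {l : Filter α} {f : α → ℝ} (hf : ∀ a, 0 < f a) :
    Tendsto (fun a => Real.log (f a)) l atTop ↔ Tendsto f l atTop :=
  ⟨fun h => (Real.tendsto_exp_atTop.comp h).congr fun a => Real.exp_log (hf a),
    Real.tendsto_log_atTop.comp⟩

lemma tendsto_neg_log_logisticSigmoid_iff {α : Type*} {l : Filter α} {f : α → ℝ} :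
    Tendsto (fun a => -Real.log (logisticSigmoid (f a))) l (𝓝 0) ↔ Tendsto f l atTop := by
  simp only [neg_log_logisticSigmoid]
  rw [Real.tendsto_log_comp_nhds_zero_iff fun a => by positivity, ← tendsto_neg_atBot_iff,
    ← Real.tendsto_exp_comp_nhds_zero]
  simpa using tendsto_const_add_iff (1 : ℝ) (c := 0) (l := l) (f := fun a => Real.exp (-f a))

lemma tendsto_finsetSum_nhds_zero_iff_of_nonneg {ι α : Type*} {l : Filter α} {s : Finset ι}
    {f : ι → α → ℝ} (hf : ∀ i ∈ s, ∀ a, 0 ≤ f i a) :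
    Tendsto (fun a => ∑ i ∈ s, f i a) l (𝓝 0) ↔ ∀ i ∈ s, Tendsto (f i) l (𝓝 0) := by
  refine ⟨fun h i hi => ?_, fun h => by simpa using tendsto_finsetSum s h⟩
  exact squeeze_zero (hf i hi) (fun a => Finset.single_le_sum (fun j hj => hf j hj a) hi) h

section DPO

variable {Y : Type*} {n : ℕ} (β : ℝ) (πref : Y → ℝ) (yw yl : Fin n → Y)

noncomputable def dpoMargin (π : Y → ℝ) (i : Fin n) : ℝ :=
  β * Real.log (π (yw i) / π (yl i)) - β * Real.log (πref (yw i) / πref (yl i))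

lemma dpoLoss_eq_sum_dpoMargin [Fintype Y] (π : Y → ℝ) :
    dpoLoss β πref yw yl π = ∑ i, -Real.log (logisticSigmoid (dpoMargin β πref yw yl π i)) :=
  rfl

lemma dpoLoss_pos [Fintype Y] (hn : 0 < n) (π : Y → ℝ) : 0 < dpoLoss β πref yw yl π :=
  have : Nonempty (Fin n) := ⟨⟨0, hn⟩⟩
  Finset.sum_pos (fun _ _ => neg_log_logisticSigmoid_pos _) Finset.univ_nonempty

variable {β πref yw yl}

lemma tendsto_dpoMargin_atTop_iff {α : Type*} {l : Filter α} {πs : α → Y → ℝ} (hβ : 0 < β)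
    {i : Fin n} (hpos : ∀ a, 0 < πs a (yw i) / πs a (yl i)) :
    Tendsto (fun a => dpoMargin β πref yw yl (πs a) i) l atTop ↔
      Tendsto (fun a => πs a (yw i) / πs a (yl i)) l atTop := by
  set c := β * Real.log (πref (yw i) / πref (yl i))
  rw [← Real.tendsto_log_comp_atTop_iff hpos,
    ← tendsto_const_mul_atTop_of_pos hβ (f := fun a => Real.log (πs a (yw i) / πs a (yl i)))]
  constructor
  · intro h
    simpa [dpoMargin, c] using tendsto_atTop_add_const_right l c h
  · intro h
    simpa [dpoMargin, c, sub_eq_add_neg] using tendsto_atTop_add_const_right l (-c) h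

lemma tendsto_dpoLoss_zero_iff [Fintype Y] {α : Type*} {l : Filter α} {πs : α → Y → ℝ} :
    Tendsto (fun a => dpoLoss β πref yw yl (πs a)) l (𝓝 0) ↔
      ∀ i, Tendsto (fun a => dpoMargin β πref yw yl (πs a) i) l atTop := by
  simp only [dpoLoss_eq_sum_dpoMargin]
  rw [tendsto_finsetSum_nhds_zero_iff_of_nonneg
    fun i _ a => (neg_log_logisticSigmoid_pos _).le]
  simp [tendsto_neg_log_logisticSigmoid_iff]

variable (yw yl)

noncomputable def tiltedPolicy (t : ℝ) : Y → ℝ :=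
  Function.extend (Sum.elim yw yl)
    (Sum.elim (fun _ => t / (n * (t + 1))) (fun _ => 1 / (n * (t + 1)))) 0

variable {yw yl}

lemma tiltedPolicy_winner (hinj : Function.Injective (Sum.elim yw yl)) (t : ℝ) (i : Fin n) :
    tiltedPolicy yw yl t (yw i) = t / (n * (t + 1)) :=
  hinj.extend_apply _ _ (Sum.inl i)

lemma tiltedPolicy_loser (hinj : Function.Injective (Sum.elim yw yl)) (t : ℝ) (i : Fin n) :
    tiltedPolicy yw yl t (yl i) = 1 / (n * (t + 1)) :=
  hinj.extend_apply _ _ (Sum.inr i)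

lemma tiltedPolicy_ratio (hinj : Function.Injective (Sum.elim yw yl)) (hn : 0 < n) {t : ℝ}
    (ht : 0 < t) (i : Fin n) :
    tiltedPolicy yw yl t (yw i) / tiltedPolicy yw yl t (yl i) = t := by
  rw [tiltedPolicy_winner hinj, tiltedPolicy_loser hinj]
  field_simp

lemma isValidPolicy_tiltedPolicy [Fintype Y] (hinj : Function.Injective (Sum.elim yw yl))
    (hn : 0 < n) {t : ℝ} (ht : 0 < t) : IsValidPolicy yw yl (tiltedPolicy yw yl t) := by
  have hnt : (0 : ℝ) < n * (t + 1) := by positivity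
  refine ⟨fun y => ?_, ?_, fun i => ?_, fun i => ?_⟩
  · by_cases hy : ∃ j, Sum.elim yw yl j = y
    · obtain ⟨j, rfl⟩ := hy
      rw [tiltedPolicy, hinj.extend_apply]
      cases j <;> simp only [Sum.elim_inl, Sum.elim_inr] <;> positivity
    · rw [tiltedPolicy, Function.extend_apply' _ _ _ hy, Pi.zero_apply]
  · rw [← tsum_fintype (L := .unconditional Y), tiltedPolicy, tsum_extend_zero hinj,
      tsum_fintype, Fintype.sum_sum_type]
    simp only [Sum.elim_inl, Sum.elim_inr, Finset.sum_const, Finset.card_univ,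
      Fintype.card_fin, nsmul_eq_mul]
    field_simp
  · rw [tiltedPolicy_winner hinj]; positivity
  · rw [tiltedPolicy_loser hinj]; positivity

end DPO

theorem dpo_inf_ratio_general {Y : Type*} [Fintype Y] (n : ℕ) (hn : 1 ≤ n)
    (β : ℝ) (hβ : 0 < β) (πref : Y → ℝ)
    (yw yl : Fin n → Y) (hdisj : Function.Injective (Sum.elim yw yl)) :
    (∀ π : Y → ℝ, IsValidPolicy yw yl π → 0 < dpoLoss β πref yw yl π) ∧
    IsGLB {l : ℝ | ∃ π : Y → ℝ, IsValidPolicy yw yl π ∧ dpoLoss β πref yw yl π = l} 0 ∧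
    (∀ π : Y → ℝ, IsValidPolicy yw yl π → dpoLoss β πref yw yl π ≠ 0) ∧
    (∀ πk : ℕ → Y → ℝ, (∀ k, IsValidPolicy yw yl (πk k)) →
      Tendsto (fun k => dpoLoss β πref yw yl (πk k)) atTop (nhds 0) →
      ∀ i, Tendsto (fun k => πk k (yw i) / πk k (yl i)) atTop atTop) := by
  have hpos := dpoLoss_pos β πref yw yl hn
  have ratio_pos {π : Y → ℝ} (hπ : IsValidPolicy yw yl π) (i : Fin n) :
      0 < π (yw i) / π (yl i) :=
    div_pos (hπ.2.2.1 i) (hπ.2.2.2 i)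
  refine ⟨fun π _ => hpos π, ⟨?_, fun b hb => ?_⟩, fun π _ => (hpos π).ne', ?_⟩
  · rintro _ ⟨π, -, rfl⟩
    exact (hpos π).le
  · set πs : ℕ → Y → ℝ := fun k => tiltedPolicy yw yl (k + 1)
    have hvalid k : IsValidPolicy yw yl (πs k) :=
      isValidPolicy_tiltedPolicy hdisj hn k.cast_add_one_pos
    have hloss : Tendsto (fun k => dpoLoss β πref yw yl (πs k)) atTop (𝓝 0) := by
      refine tendsto_dpoLoss_zero_iff.2 fun i => (tendsto_dpoMargin_atTop_iff hβ
        fun k => ratio_pos (hvalid k) i).2 ?_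
      simp only [πs, tiltedPolicy_ratio hdisj hn (Nat.cast_add_one_pos _)]
      exact tendsto_natCast_atTop_atTop.atTop_add tendsto_const_nhds
    exact ge_of_tendsto hloss (Eventually.of_forall fun k => hb ⟨πs k, hvalid k, rfl⟩)
  · intro πk hvalid hloss i
    exact (tendsto_dpoMargin_atTop_iff hβ fun k => ratio_pos (hvalid k) i).1
      (tendsto_dpoLoss_zero_iff.1 hloss i)

/-- Proposition 1: for mutually disjoint preference pairs, (i) the DPO loss is
strictly positive for every valid policy, (ii) its infimum over valid policies
is 0 and is not attained, and (iii) any sequence of valid policies driving the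
loss to 0 drives every winner/loser probability ratio to +∞. -/
theorem dpo_inf_ratio {Y : Type*} [Fintype Y] (n : ℕ) (hn : 1 ≤ n)
    (β : ℝ) (hβ : 0 < β) (πref : Y → ℝ) (hπref : ∀ y, 0 < πref y)
    (yw yl : Fin n → Y) (hdisj : Function.Injective (Sum.elim yw yl)) :
    (∀ π : Y → ℝ, IsValidPolicy yw yl π → 0 < dpoLoss β πref yw yl π) ∧
    IsGLB {l : ℝ | ∃ π : Y → ℝ, IsValidPolicy yw yl π ∧ dpoLoss β πref yw yl π = l} 0 ∧
    (∀ π : Y → ℝ, IsValidPolicy yw yl π → dpoLoss β πref yw yl π ≠ 0) ∧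
    (∀ πk : ℕ → Y → ℝ, (∀ k, IsValidPolicy yw yl (πk k)) →
      Tendsto (fun k => dpoLoss β πref yw yl (πk k)) atTop (nhds 0) →
      ∀ i, Tendsto (fun k => πk k (yw i) / πk k (yl i)) atTop atTop) :=
  dpo_inf_ratio_general n hn β hβ πref yw yl hdisj
end

section
/- Let Y be a finite set, β > 0, π_ref : Y → ℝ with 0 < π_ref(y) < 1 for all y, and let (y₁ʷ, y₁ˡ), …, (yₙʷ, yₙˡ) be preference pairs whose 2n responses are pairwise distinct in Y. Let (π_k) be a sequence of probability mass functions on Y, each positive on all 2n responses, and let L be the DPO loss L(π) = ∑_{i=1}^n −log σ(β log(π(yᵢʷ)/π(yᵢˡ)) − β log(π_ref(yᵢʷ)/π_ref(yᵢˡ))). Then L(π_k) → 0 if and only if π_k(yᵢˡ)/π_k(yᵢʷ) → 0 for every i ∈ {1,…,n}. Moreover, if L(π_k) → 0 then ∑_{y ∈ C} π_k(y) → 0, where C = {y₁ˡ, …, yₙˡ} is the set of dispreferred responses; equivalently, the total mass π_k assigns to the complement of C tends to 1. -/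
open Filter

lemma neg_log_sigmoid' (x : ℝ) :
    -Real.log (1 / (1 + Real.exp (-x))) = Real.log (1 + Real.exp (-x)) := by
  rw [one_div, Real.log_inv, neg_neg]

lemma f_pos' (x : ℝ) : 0 < Real.log (1 + Real.exp (-x)) :=
  Real.log_pos (by linarith [Real.exp_pos (-x)])

lemma f_tendsto_zero_iff' {g : ℕ → ℝ} :
    Tendsto (fun k => Real.log (1 + Real.exp (-g k))) atTop (nhds 0) ↔
      Tendsto g atTop atTop := by
  constructor
  · intro h
    have h1 : Tendsto (fun k => 1 + Real.exp (-g k)) atTop (nhds 1) := by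
      have := (Real.continuous_exp.tendsto 0).comp h
      simp only [Function.comp_def, Real.exp_zero] at this
      convert this using 2 with k
      rw [Real.exp_log (by positivity)]
    have h2 : Tendsto (fun k => Real.exp (-g k)) atTop (nhds 0) := by
      have := h1.sub_const 1
      simpa using this
    exact tendsto_neg_atBot_iff.mp (Real.tendsto_exp_comp_nhds_zero.mp h2)
  · intro h
    have h2 : Tendsto (fun k => Real.exp (-g k)) atTop (nhds 0) :=
      Real.tendsto_exp_comp_nhds_zero.mpr (tendsto_neg_atBot_iff.mpr h)
    have h1 : Tendsto (fun k => 1 + Real.exp (-g k)) atTop (nhds 1) := by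
      simpa using (tendsto_const_nhds (x := (1:ℝ))).add h2
    have := ((Real.continuousAt_log (one_ne_zero)).tendsto).comp h1
    simpa [Function.comp_def] using this


/-- Corollary 1 (limit formulation): for a sequence of valid policies, the DPO
loss tends to 0 iff every loser/winner probability ratio tends to 0; moreover in
that case the total mass on the set C of dispreferred responses tends to 0,
equivalently the mass on its complement tends to 1. -/
theorem dpo_minimizers {Y : Type*} [Fintype Y] [DecidableEq Y] (n : ℕ) (hn : 1 ≤ n)
    (β : ℝ) (hβ : 0 < β) (πref : Y → ℝ) (hπref : ∀ y, 0 < πref y ∧ πref y < 1)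
    (yw yl : Fin n → Y) (hdisj : Function.Injective (Sum.elim yw yl))
    (πk : ℕ → Y → ℝ) (hπk : ∀ k, IsValidPolicy yw yl (πk k)) :
    (Tendsto (fun k => dpoLoss β πref yw yl (πk k)) atTop (nhds 0) ↔
      ∀ i, Tendsto (fun k => πk k (yl i) / πk k (yw i)) atTop (nhds 0)) ∧
    (Tendsto (fun k => dpoLoss β πref yw yl (πk k)) atTop (nhds 0) →
      Tendsto (fun k => ∑ y ∈ Finset.univ.image yl, πk k y) atTop (nhds 0) ∧
      Tendsto (fun k => ∑ y ∈ (Finset.univ.image yl)ᶜ, πk k y) atTop (nhds 1)) := by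
  -- notation
  set t : Fin n → ℕ → ℝ := fun i k =>
    β * Real.log (πk k (yw i) / πk k (yl i)) - β * Real.log (πref (yw i) / πref (yl i))
    with ht
  have hw : ∀ k i, 0 < πk k (yw i) := fun k => (hπk k).2.2.1
  have hl : ∀ k i, 0 < πk k (yl i) := fun k => (hπk k).2.2.2
  have hloss : ∀ k, dpoLoss β πref yw yl (πk k) =
      ∑ i, Real.log (1 + Real.exp (-(t i k))) := by
    intro k
    unfold dpoLoss logisticSigmoid
    exact Finset.sum_congr rfl fun i _ => neg_log_sigmoid' _
  -- main iff
  have key : Tendsto (fun k => dpoLoss β πref yw yl (πk k)) atTop (nhds 0) ↔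
      ∀ i, Tendsto (fun k => πk k (yl i) / πk k (yw i)) atTop (nhds 0) := by
    constructor
    · intro h i
      -- squeeze out term i
      have hterm : Tendsto (fun k => Real.log (1 + Real.exp (-(t i k)))) atTop (nhds 0) := by
        refine squeeze_zero (fun k => (f_pos' _).le) (fun k => ?_)
          (by simpa [hloss] using h)
        exact Finset.single_le_sum (f := fun j => Real.log (1 + Real.exp (-t j k))) (fun j _ => (f_pos' _).le) (Finset.mem_univ i)
      have htt : Tendsto (t i) atTop atTop := f_tendsto_zero_iff'.mp hterm
      have hlogt : Tendsto (fun k => Real.log (πk k (yw i) / πk k (yl i))) atTop atTop := by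
        have h1 : Tendsto (fun k => β * Real.log (πk k (yw i) / πk k (yl i)))
            atTop atTop := by
          have := tendsto_atTop_add_const_right atTop
            (β * Real.log (πref (yw i) / πref (yl i))) htt
          simpa [ht, sub_add_cancel] using this
        have := h1.const_mul_atTop (inv_pos.mpr hβ)
        convert this using 2 with k
        field_simp
      have : Tendsto (fun k => Real.exp (-(Real.log (πk k (yw i) / πk k (yl i)))))
          atTop (nhds 0) :=
        Real.tendsto_exp_comp_nhds_zero.mpr (tendsto_neg_atBot_iff.mpr hlogt)
      convert this using 2 with k
      rw [Real.exp_neg, Real.exp_log (div_pos (hw k i) (hl k i)), inv_div]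
    · intro h
      have hterm : ∀ i : Fin n,
          Tendsto (fun k => Real.log (1 + Real.exp (-(t i k)))) atTop (nhds 0) := by
        intro i
        refine f_tendsto_zero_iff'.mpr ?_
        have hlogt : Tendsto (fun k => Real.log (πk k (yw i) / πk k (yl i)))
            atTop atTop := by
          have hexp : Tendsto (fun k =>
              Real.exp (-(Real.log (πk k (yw i) / πk k (yl i))))) atTop (nhds 0) := by
            convert h i using 2 with k
            rw [Real.exp_neg, Real.exp_log (div_pos (hw k i) (hl k i)), inv_div]
          exact tendsto_neg_atBot_iff.mp (Real.tendsto_exp_comp_nhds_zero.mp hexp)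
        have h1 := hlogt.const_mul_atTop hβ
        exact tendsto_atTop_add_const_right atTop _ h1
      have h0 : Tendsto (fun k => ∑ i : Fin n, Real.log (1 + Real.exp (-(t i k))))
          atTop (nhds 0) := by
        have := tendsto_finset_sum Finset.univ (fun i _ => hterm i)
        simpa using this
      simpa [hloss] using h0
  refine ⟨key, fun h => ?_⟩
  have hratio := key.mp h
  -- each loser mass tends to 0
  have hli : ∀ i, Tendsto (fun k => πk k (yl i)) atTop (nhds 0) := by
    intro i
    refine squeeze_zero (fun k => (hl k i).le) (fun k => ?_) (hratio i)
    have hw1 : πk k (yw i) ≤ 1 := by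
      have := Finset.single_le_sum (fun y _ => (hπk k).1 y) (Finset.mem_univ (yw i))
      rw [(hπk k).2.1] at this
      exact this
    rw [le_div_iff₀ (hw k i)]
    exact mul_le_of_le_one_right (hl k i).le hw1
  have hylinj : Function.Injective yl := fun i j hij => by
    have : Sum.elim yw yl (Sum.inr i) = Sum.elim yw yl (Sum.inr j) := by simpa using hij
    simpa using hdisj this
  have hSeq : ∀ k, ∑ y ∈ Finset.univ.image yl, πk k y = ∑ i, πk k (yl i) := fun k =>
    Finset.sum_image (fun i _ j _ hij => hylinj hij)
  have hS : Tendsto (fun k => ∑ y ∈ Finset.univ.image yl, πk k y) atTop (nhds 0) := by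
    have := tendsto_finset_sum Finset.univ (fun i _ => hli i)
    simpa [hSeq] using this
  refine ⟨hS, ?_⟩
  have hcompl : ∀ k, ∑ y ∈ (Finset.univ.image yl)ᶜ, πk k y =
      1 - ∑ y ∈ Finset.univ.image yl, πk k y := by
    intro k
    have := Finset.sum_add_sum_compl (Finset.univ.image yl) (πk k)
    rw [(hπk k).2.1] at this
    linarith
  have := (tendsto_const_nhds (x := (1:ℝ)) (f := atTop)).sub hS
  simpa [hcompl] using this
end

section
/- Let Y be a finite set, β > 0, π_ref a probability mass function on Y with π_ref(y) > 0 for all y. For r : Y → ℝ let Z(r) = ∑_{y∈Y} π_ref(y)·exp(r(y)/β) and π*_r(y) = π_ref(y)·exp(r(y)/β)/Z(r), and define V(r) = sup over probability mass functions π on Y of [∑_y π(y)r(y) − ∑_y π_ref(y)r(y) − β·KL(π ‖ π_ref)] (with KL(π‖π_ref) = +∞ when π is not absolutely continuous w.r.t. π_ref). Then V(r) = β·KL(π_ref ‖ π*_r) for every r : Y → ℝ, the supremum being attained at π = π*_r. Consequently, for every nonempty finite set S of reward functions r : Y → ℝ, min_{r ∈ S} V(r) = β·min_{r ∈ S} KL(π_ref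 ‖ π*_r), and any r̂ minimizing KL(π_ref ‖ π*_r) over r ∈ S yields a policy π*_{r̂} attaining the inner supremum for r̂. -/
/-- Kullback–Leibler divergence between pmfs on a finite set:
KL(p ‖ q) = ∑_{y : p(y) > 0} p(y) log(p(y)/q(y)). -/
noncomputable def klDiv {Y : Type*} [Fintype Y] (p q : Y → ℝ) : ℝ :=
  ∑ y, if 0 < p y then p y * Real.log (p y / q y) else 0

/-- The Gibbs policy induced by reward r at scale β relative to π_ref. -/
noncomputable def gibbsPolicy {Y : Type*} [Fintype Y] (β : ℝ) (πref : Y → ℝ)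
    (r : Y → ℝ) (y : Y) : ℝ :=
  πref y * Real.exp (r y / β) / (∑ y', πref y' * Real.exp (r y' / β))

/-!
Writing `Z` for the partition function and `π*` for the Gibbs policy, every pmf `π` satisfies
`KL(π ‖ π*) = KL(π ‖ π_ref) - E_π[r]/β + log Z`. Applied to `π` and to `π_ref` (where
`KL(π_ref ‖ π_ref) = 0`), this rewrites the objective `E_π[r] - E_ref[r] - β·KL(π ‖ π_ref)` as
`β·KL(π_ref ‖ π*) - β·KL(π ‖ π*)`, which by Gibbs' inequality is maximal at `π = π*`.
The pessimistic identity is then monotonicity of `x ↦ β·x`.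
-/

open Finset

section GibbsVariational

variable {Y : Type*} [Fintype Y]

lemma sub_le_mul_log_div {a b : ℝ} (ha : 0 < a) (hb : 0 < b) :
    a - b ≤ a * Real.log (a / b) := by
  have h := Real.one_sub_inv_le_log_of_pos (div_pos ha hb)
  rw [inv_div] at h
  calc a - b = a * (1 - b / a) := by field_simp
    _ ≤ a * Real.log (a / b) := mul_le_mul_of_nonneg_left h ha.le

lemma klDiv_nonneg {p q : Y → ℝ} (hq : ∀ y, 0 < q y)
    (hps : ∑ y, p y = 1) (hqs : ∑ y, q y = 1) : 0 ≤ klDiv p q :=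
  calc 0 = ∑ y, (p y - q y) := by rw [sum_sub_distrib, hps, hqs, sub_self]
    _ ≤ klDiv p q := sum_le_sum fun y _ => by
      split_ifs with hpy
      · exact sub_le_mul_log_div hpy (hq y)
      · linarith [not_lt.1 hpy, hq y]

lemma klDiv_self (p : Y → ℝ) : klDiv p p = 0 :=
  sum_eq_zero fun y _ => by
    split_ifs with h
    · rw [div_self h.ne', Real.log_one, mul_zero]
    · rfl

lemma nonempty_of_sum_eq_one {p : Y → ℝ} (hps : ∑ y, p y = 1) : Nonempty Y :=
  univ_nonempty_iff.mp <| nonempty_of_sum_ne_zero <| hps ▸ one_ne_zero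

noncomputable def gibbsPartition (β : ℝ) (q r : Y → ℝ) : ℝ :=
  ∑ y, q y * Real.exp (r y / β)

noncomputable def regularizedAdvantage (β : ℝ) (q r π : Y → ℝ) : ℝ :=
  (∑ y, π y * r y) - (∑ y, q y * r y) - β * klDiv π q

section GibbsPolicy

variable {β : ℝ} {q : Y → ℝ} (r : Y → ℝ)

lemma gibbsPolicy_eq (y : Y) :
    gibbsPolicy β q r y = q y * Real.exp (r y / β) / gibbsPartition β q r :=
  rfl

lemma gibbsPartition_pos [Nonempty Y] (hq : ∀ y, 0 < q y) : 0 < gibbsPartition β q r :=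
  sum_pos (fun y _ => mul_pos (hq y) (Real.exp_pos _)) univ_nonempty

lemma gibbsPolicy_pos [Nonempty Y] (hq : ∀ y, 0 < q y) (y : Y) : 0 < gibbsPolicy β q r y :=
  div_pos (mul_pos (hq y) (Real.exp_pos _)) (gibbsPartition_pos r hq)

lemma sum_gibbsPolicy [Nonempty Y] (hq : ∀ y, 0 < q y) : ∑ y, gibbsPolicy β q r y = 1 := by
  simp only [gibbsPolicy_eq, ← sum_div]
  exact div_self (gibbsPartition_pos r hq).ne'

lemma log_gibbsPolicy [Nonempty Y] (hq : ∀ y, 0 < q y) (y : Y) :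
    Real.log (gibbsPolicy β q r y)
      = Real.log (q y) + r y / β - Real.log (gibbsPartition β q r) := by
  rw [gibbsPolicy_eq,
    Real.log_div (mul_pos (hq y) (Real.exp_pos _)).ne' (gibbsPartition_pos r hq).ne',
    Real.log_mul (hq y).ne' (Real.exp_ne_zero _), Real.log_exp]

lemma klDiv_gibbsPolicy (hq : ∀ y, 0 < q y) {p : Y → ℝ} (hp : ∀ y, 0 ≤ p y)
    (hps : ∑ y, p y = 1) :
    klDiv p (gibbsPolicy β q r)
      = klDiv p q - (∑ y, p y * r y) / β + Real.log (gibbsPartition β q r) := by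
  have := nonempty_of_sum_eq_one hps
  have termwise : ∀ y ∈ univ,
      (if 0 < p y then p y * Real.log (p y / gibbsPolicy β q r y) else 0)
        = (if 0 < p y then p y * Real.log (p y / q y) else 0)
          - p y * r y / β + p y * Real.log (gibbsPartition β q r) := by
    intro y _
    by_cases hpy : 0 < p y
    · rw [if_pos hpy, if_pos hpy, Real.log_div hpy.ne' (gibbsPolicy_pos r hq y).ne',
        Real.log_div hpy.ne' (hq y).ne', log_gibbsPolicy r hq]
      ring
    · rw [if_neg hpy, if_neg hpy, le_antisymm (not_lt.1 hpy) (hp y)]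
      ring
  rw [klDiv, klDiv, sum_congr rfl termwise, sum_add_distrib, sum_sub_distrib, ← sum_div,
    ← sum_mul, hps, one_mul]

variable (hβ : β ≠ 0) (hq : ∀ y, 0 < q y) (hqs : ∑ y, q y = 1)
include hβ hq hqs

lemma regularizedAdvantage_eq {π : Y → ℝ} (hπ : ∀ y, 0 ≤ π y) (hπs : ∑ y, π y = 1) :
    regularizedAdvantage β q r π
      = β * klDiv q (gibbsPolicy β q r) - β * klDiv π (gibbsPolicy β q r) := by
  rw [regularizedAdvantage, klDiv_gibbsPolicy r hq hπ hπs,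
    klDiv_gibbsPolicy r hq (fun y => (hq y).le) hqs, klDiv_self]
  field_simp
  ring

lemma regularizedAdvantage_gibbsPolicy :
    regularizedAdvantage β q r (gibbsPolicy β q r) = β * klDiv q (gibbsPolicy β q r) := by
  have := nonempty_of_sum_eq_one hqs
  rw [regularizedAdvantage_eq r hβ hq hqs (fun y => (gibbsPolicy_pos r hq y).le)
    (sum_gibbsPolicy r hq), klDiv_self, mul_zero, sub_zero]

end GibbsPolicy

lemma isGreatest_regularizedAdvantage {β : ℝ} (hβ : 0 < β) {q : Y → ℝ} (hq : ∀ y, 0 < q y)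
    (hqs : ∑ y, q y = 1) (r : Y → ℝ) :
    IsGreatest {v | ∃ π : Y → ℝ, (∀ y, 0 ≤ π y) ∧ (∑ y, π y = 1) ∧
        v = regularizedAdvantage β q r π}
      (β * klDiv q (gibbsPolicy β q r)) := by
  have := nonempty_of_sum_eq_one hqs
  have hg := gibbsPolicy_pos (β := β) r hq
  refine ⟨⟨gibbsPolicy β q r, fun y => (hg y).le, sum_gibbsPolicy r hq,
    (regularizedAdvantage_gibbsPolicy r hβ.ne' hq hqs).symm⟩, ?_⟩
  rintro v ⟨π, hπ, hπs, rfl⟩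
  rw [regularizedAdvantage_eq r hβ.ne' hq hqs hπ hπs]
  exact sub_le_self _ (mul_nonneg hβ.le (klDiv_nonneg hg hπs (sum_gibbsPolicy r hq)))

end GibbsVariational

/-- Theorem 2 (key identity): for each reward r, the advantage-vs-reference
KL-regularized objective, maximized over pmfs π, has maximum value
V(r) = β·KL(π_ref ‖ π*_r), attained at the Gibbs policy π*_r; consequently the
pessimistic objective min_{r ∈ S} V(r) equals β·min_{r ∈ S} KL(π_ref ‖ π*_r),
and any r̂ minimizing KL(π_ref ‖ π*_r) over S yields a policy π*_{r̂} attaining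
the inner supremum for r̂. -/
theorem pessimistic_alignment_forward_kl {Y : Type*} [Fintype Y]
    (β : ℝ) (hβ : 0 < β)
    (πref : Y → ℝ) (href_pos : ∀ y, 0 < πref y) (href_sum : ∑ y, πref y = 1) :
    (∀ r : Y → ℝ,
      IsGreatest {v : ℝ | ∃ π : Y → ℝ, (∀ y, 0 ≤ π y) ∧ (∑ y, π y = 1) ∧
          v = (∑ y, π y * r y) - (∑ y, πref y * r y) - β * klDiv π πref}
        (β * klDiv πref (gibbsPolicy β πref r)) ∧
      (∑ y, gibbsPolicy β πref r y * r y) - (∑ y, πref y * r y)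
          - β * klDiv (gibbsPolicy β πref r) πref
        = β * klDiv πref (gibbsPolicy β πref r)) ∧
    (∀ (S : Finset (Y → ℝ)) (hS : S.Nonempty),
      S.inf' hS (fun r => β * klDiv πref (gibbsPolicy β πref r))
        = β * S.inf' hS (fun r => klDiv πref (gibbsPolicy β πref r))) :=
  ⟨fun r => ⟨isGreatest_regularizedAdvantage hβ href_pos href_sum r,
      regularizedAdvantage_gibbsPolicy r hβ.ne' href_pos href_sum⟩,
    fun S hS => (apply_inf'_eq_inf'_comp hS _ fun a b => mul_min_of_nonneg a b hβ.le).symm⟩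
end

section
/- Let V be a nonempty finite set (a vocabulary), n ≥ 1, and let cʷ, cˡ : V → ℕ be count vectors with ∑_{j∈V} cʷ(j) = ∑_{j∈V} cˡ(j) = n. Let Δ : V → ℝ be Δ(j) = cʷ(j) − cˡ(j). For θ : V → ℝ define the log-likelihood ℓ(θ) = ∑_j cʷ(j)θ(j) − n·log(∑_j exp(θ(j))) and its upper bound ℓ̃(θ) = ∑_j cʷ(j)θ(j) − n·max_j θ(j). Then: (i) ℓ(θ) ≤ ℓ̃(θ) for every θ; (ii) for all real τ, τ′ with 0 ≤ τ ≤ τ′, ℓ̃(τ′·Δ) ≤ ℓ̃(τ·Δ); and (iii) if moreover τ < τ′ and there exists j ∈ V with cʷ(j) ≥ 1 and Δ(j) < max_{j′} Δ(j′), then ℓ̃(τ′·Δ) < ℓ̃(τ·Δ). -/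
lemma sup'_smul_aux {V : Type*} [Fintype V] [Nonempty V] (τ : ℝ) (hτ : 0 ≤ τ) (f : V → ℝ) :
    Finset.univ.sup' Finset.univ_nonempty (τ • f)
      = τ * Finset.univ.sup' Finset.univ_nonempty f := by
  apply le_antisymm
  · apply Finset.sup'_le
    intro j _
    exact mul_le_mul_of_nonneg_left (Finset.le_sup' f (Finset.mem_univ j)) hτ
  · obtain ⟨j, _, hj⟩ := Finset.exists_mem_eq_sup' Finset.univ_nonempty f
    rw [hj]
    exact Finset.le_sup' (τ • f) (Finset.mem_univ j)

lemma linear_aux {V : Type*} [Fintype V] [Nonempty V]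
    (n : ℕ) (cw : V → ℕ) (hcw : ∑ j, cw j = n) (Δ : V → ℝ)
    (ℓup : (V → ℝ) → ℝ)
    (hℓup : ∀ θ, ℓup θ = (∑ j, (cw j : ℝ) * θ j)
        - n * Finset.univ.sup' Finset.univ_nonempty θ)
    (τ : ℝ) (hτ : 0 ≤ τ) :
    ℓup (τ • Δ) = τ * ((∑ j, (cw j : ℝ) * Δ j)
        - n * Finset.univ.sup' Finset.univ_nonempty Δ) := by
  rw [hℓup, sup'_smul_aux τ hτ]
  simp only [Pi.smul_apply, smul_eq_mul]
  ring_nf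
  rw [Finset.mul_sum]
  ring_nf

/-- Proposition 2 (unigram model): with ℓ(θ) = cʷ·θ − n log ∑ⱼ e^{θⱼ} and the
upper bound ℓ̃(θ) = cʷ·θ − n maxⱼ θⱼ, we have (i) ℓ ≤ ℓ̃ everywhere; (ii) along
the DPO gradient-descent ray θ = τ·Δ with Δ = cʷ − cˡ, the bound ℓ̃(τ·Δ) is
nonincreasing in τ ≥ 0; and (iii) it is strictly decreasing as soon as some
token with positive count in yʷ has a non-maximal coordinate of Δ. -/
theorem dpo_likelihood_bound {V : Type*} [Fintype V] [Nonempty V]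
    (n : ℕ) (hn : 1 ≤ n)
    (cw cl : V → ℕ) (hcw : ∑ j, cw j = n) (hcl : ∑ j, cl j = n)
    (Δ : V → ℝ) (hΔ : ∀ j, Δ j = (cw j : ℝ) - (cl j : ℝ))
    (ℓ : (V → ℝ) → ℝ)
    (hℓ : ∀ θ, ℓ θ = (∑ j, (cw j : ℝ) * θ j) - n * Real.log (∑ j, Real.exp (θ j)))
    (ℓup : (V → ℝ) → ℝ)
    (hℓup : ∀ θ, ℓup θ = (∑ j, (cw j : ℝ) * θ j)
        - n * Finset.univ.sup' Finset.univ_nonempty θ) :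
    (∀ θ : V → ℝ, ℓ θ ≤ ℓup θ) ∧
    (∀ τ τ' : ℝ, 0 ≤ τ → τ ≤ τ' → ℓup (τ' • Δ) ≤ ℓup (τ • Δ)) ∧
    (∀ τ τ' : ℝ, 0 ≤ τ → τ < τ' →
      (∃ j, 1 ≤ cw j ∧ Δ j < Finset.univ.sup' Finset.univ_nonempty Δ) →
      ℓup (τ' • Δ) < ℓup (τ • Δ)) := by
  set M := Finset.univ.sup' Finset.univ_nonempty Δ with hM
  have hKle : (∑ j, (cw j : ℝ) * Δ j) - n * M ≤ 0 := by
    have h1 : (∑ j, (cw j : ℝ) * Δ j) ≤ ∑ j, (cw j : ℝ) * M := by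
      apply Finset.sum_le_sum
      intro j _
      exact mul_le_mul_of_nonneg_left (Finset.le_sup' Δ (Finset.mem_univ j)) (Nat.cast_nonneg _)
    have h2 : ∑ j, (cw j : ℝ) * M = n * M := by
      rw [← Finset.sum_mul, ← Nat.cast_sum, hcw]
    linarith
  refine ⟨?_, ?_, ?_⟩
  · intro θ
    rw [hℓ, hℓup]
    have hsup : Finset.univ.sup' Finset.univ_nonempty θ
        ≤ Real.log (∑ j, Real.exp (θ j)) := by
      obtain ⟨j, _, hj⟩ := Finset.exists_mem_eq_sup' Finset.univ_nonempty θ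
      rw [hj]
      calc θ j = Real.log (Real.exp (θ j)) := (Real.log_exp _).symm
        _ ≤ Real.log (∑ j, Real.exp (θ j)) := by
            apply Real.log_le_log (Real.exp_pos _)
            exact Finset.single_le_sum (fun i _ => (Real.exp_pos (θ i)).le) (Finset.mem_univ j)
    have hn' : (0:ℝ) ≤ n := Nat.cast_nonneg _
    nlinarith
  · intro τ τ' hτ hττ'
    rw [linear_aux n cw hcw Δ ℓup hℓup τ hτ,
      linear_aux n cw hcw Δ ℓup hℓup τ' (hτ.trans hττ'), ← hM]
    nlinarith
  · intro τ τ' hτ hττ' ⟨j, hj1, hj2⟩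
    rw [linear_aux n cw hcw Δ ℓup hℓup τ hτ,
      linear_aux n cw hcw Δ ℓup hℓup τ' (hτ.trans hττ'.le), ← hM]
    have hKlt : (∑ j, (cw j : ℝ) * Δ j) - n * M < 0 := by
      have h1 : (∑ j, (cw j : ℝ) * Δ j) < ∑ j, (cw j : ℝ) * M := by
        apply Finset.sum_lt_sum
        · intro i _
          exact mul_le_mul_of_nonneg_left (Finset.le_sup' Δ (Finset.mem_univ i)) (Nat.cast_nonneg _)
        · refine ⟨j, Finset.mem_univ j, ?_⟩
          have : (1:ℝ) ≤ cw j := by exact_mod_cast hj1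
          exact mul_lt_mul_of_pos_left hj2 (by linarith)
      have h2 : ∑ j, (cw j : ℝ) * M = n * M := by
        rw [← Finset.sum_mul, ← Nat.cast_sum, hcw]
      linarith
    nlinarith
end

section
/- Let V be a nonempty finite set, n ≥ 1, and let cʷ, cˡ : V → ℕ be count vectors with ∑_{j∈V} cʷ(j) = ∑_{j∈V} cˡ(j) = n. Let Δ(j) = cʷ(j) − cˡ(j), let i* ∈ V satisfy Δ(i*) = max_{j∈V} Δ(j), and let ĉ : V → ℕ be the count vector with ĉ(i*) = n and ĉ(j) = 0 for j ≠ i*. For θ : V → ℝ define ℓ_θ(c) = ∑_j c(j)θ(j) − n·log(∑_j exp(θ(j))). Then for every τ ≥ 0, with θ = τ·Δ, ℓ_θ(cʷ) − ℓ_θ(ĉ) = τ·(∑_j cʷ(j)Δ(j) − n·max_j Δ(j)), and this quantity is ≤ 0; in particular the log-likelihood gap between the preferred response yʷ and the degenerate response ŷ = [i*, i*, …, i*] equals τ·k for a fixed constant k ≤ 0. -/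
/-- Proposition 3 (unigram model): with ℓ_θ(c) = c·θ − n log ∑ⱼ e^{θⱼ}, along
the DPO gradient-descent ray θ = τ·Δ (τ ≥ 0, Δ = cʷ − cˡ), the log-likelihood
gap between the preferred response (counts cʷ) and the degenerate response
ŷ = [i*, …, i*] repeating an argmax token of Δ (counts ĉ) equals τ·k for the
fixed constant k = ∑ⱼ cʷ(j)Δ(j) − n·maxⱼ Δ(j), and k ≤ 0. -/
theorem dpo_degeneracy {V : Type*} [Fintype V] [Nonempty V]
    (n : ℕ) (hn : 1 ≤ n)
    (cw cl : V → ℕ) (hcw : ∑ j, cw j = n) (hcl : ∑ j, cl j = n)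
    (Δ : V → ℝ) (hΔ : ∀ j, Δ j = (cw j : ℝ) - (cl j : ℝ))
    (istar : V) (histar : Δ istar = Finset.univ.sup' Finset.univ_nonempty Δ)
    (chat : V → ℕ) (hchat_i : chat istar = n) (hchat_ne : ∀ j ≠ istar, chat j = 0)
    (ℓ : (V → ℝ) → (V → ℕ) → ℝ)
    (hℓ : ∀ θ c, ℓ θ c = (∑ j, (c j : ℝ) * θ j) - n * Real.log (∑ j, Real.exp (θ j))) :
    ((∑ j, (cw j : ℝ) * Δ j) - n * Finset.univ.sup' Finset.univ_nonempty Δ ≤ 0) ∧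
    (∀ τ : ℝ, 0 ≤ τ →
      ℓ (τ • Δ) cw - ℓ (τ • Δ) chat
        = τ * ((∑ j, (cw j : ℝ) * Δ j)
            - n * Finset.univ.sup' Finset.univ_nonempty Δ)) := by
  classical
  set M := Finset.univ.sup' Finset.univ_nonempty Δ with hM
  constructor
  · have h1 : (∑ j, (cw j : ℝ) * Δ j) ≤ ∑ j, (cw j : ℝ) * M := by
      apply Finset.sum_le_sum
      intro j _
      exact mul_le_mul_of_nonneg_left (Finset.le_sup' Δ (Finset.mem_univ j))
        (Nat.cast_nonneg _)
    have h2 : (∑ j, (cw j : ℝ) * M) = n * M := by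
      rw [← Finset.sum_mul, ← Nat.cast_sum, hcw]
    linarith
  · intro τ hτ
    have hchat : ∀ j, (chat j : ℝ) * (τ • Δ) j = (if j = istar then (n : ℝ) * (τ * M) else 0) := by
      intro j
      by_cases h : j = istar
      · subst h; simp [hchat_i, ← histar, Pi.smul_apply, smul_eq_mul]
      · simp [hchat_ne j h, h]
    rw [hℓ, hℓ]
    have : (∑ j, (chat j : ℝ) * (τ • Δ) j) = (n : ℝ) * (τ * M) := by
      rw [Finset.sum_congr rfl (fun j _ => hchat j), Finset.sum_ite_eq' Finset.univ istar]
      simp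
    rw [this]
    have : (∑ j, (cw j : ℝ) * (τ • Δ) j) = τ * ∑ j, (cw j : ℝ) * Δ j := by
      rw [Finset.mul_sum]
      exact Finset.sum_congr rfl (fun j _ => by simp [Pi.smul_apply, smul_eq_mul]; ring)
    rw [this]
    ring
end

section
/- Let β > 0, α > 1, and ψ_w > 0 be real numbers. Define f : (0, ∞) → ℝ by f(ψ) = log(ψ_w^β + ψ^β) − (β/α)·log ψ. Then f has a unique global minimizer on (0, ∞), located at ψ* = (α − 1)^{−1/β}·ψ_w; equivalently, log ψ* = −(1/β)·log(α − 1) + log ψ_w, and f(ψ*) < f(ψ) for every ψ ∈ (0,∞) with ψ ≠ ψ*. -/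
/-!
Substituting `x = ψ ^ β` turns `α * f` into `x ↦ α log (ψw ^ β + x) - log x`. Writing
`ψw ^ β = (α - 1) s` with `s = ψstar ^ β`, we get `ψw ^ β + x = α ((1 - 1/α) s + (1/α) x)`, so
strict concavity of `log` gives `α log (ψw ^ β + x) - log x > α log (α s) - log s` for `x ≠ s`,
with equality at `x = s`.
-/

open Real

lemma mul_log_mul_sub_log_lt {α s x : ℝ} (hα : 1 < α) (hs : 0 < s) (hx : 0 < x) (hne : s ≠ x) :
    α * log (α * s) - log s < α * log ((α - 1) * s + x) - log x := by
  have hα0 : 0 < α := by linarith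
  have hconcave : (1 - 1 / α) * log s + 1 / α * log x < log ((1 - 1 / α) * s + 1 / α * x) :=
    strictConcaveOn_log_Ioi.2 (Set.mem_Ioi.2 hs) (Set.mem_Ioi.2 hx) hne
      (by rw [sub_pos, div_lt_one hα0]; exact hα) (by positivity) (by ring)
  have hsplit : (α - 1) * s + x = α * ((1 - 1 / α) * s + 1 / α * x) := by
    field_simp
  have hmid : 0 < (1 - 1 / α) * s + 1 / α * x := by
    rw [← mul_lt_mul_iff_right₀ hα0, ← hsplit, mul_zero]; nlinarith
  have hweighted : (α - 1) * log s + log x < α * log ((1 - 1 / α) * s + 1 / α * x) :=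
    calc (α - 1) * log s + log x = α * ((1 - 1 / α) * log s + 1 / α * log x) := by
          field_simp
      _ < α * log ((1 - 1 / α) * s + 1 / α * x) := by gcongr
  rw [hsplit, log_mul hα0.ne' hmid.ne', log_mul hα0.ne' hs.ne']
  linarith

lemma rpow_neg_one_div_mul_rpow {a w β : ℝ} (ha : 0 < a) (hw : 0 ≤ w) (hβ : β ≠ 0) :
    (a ^ (-1 / β) * w) ^ β = a⁻¹ * w ^ β := by
  rw [mul_rpow (rpow_nonneg ha.le _) hw, ← rpow_mul ha.le, div_mul_cancel₀ _ hβ, rpow_neg_one]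

/-- Proposition 5 (p-DPO optimum): for β > 0, α > 1 and fixed ψ_w > 0, the
function f(ψ) = log(ψ_w^β + ψ^β) − (β/α)·log ψ on (0, ∞) has the unique global
minimizer ψ* = (α − 1)^{−1/β}·ψ_w, i.e. log ψ* = −(1/β)log(α−1) + log ψ_w. -/
theorem pdpo_optimum (β α ψw : ℝ) (hβ : 0 < β) (hα : 1 < α) (hψw : 0 < ψw)
    (f : ℝ → ℝ) (hf : ∀ ψ, f ψ = Real.log (ψw ^ β + ψ ^ β) - (β / α) * Real.log ψ)
    (ψstar : ℝ) (hψstar : ψstar = (α - 1) ^ (-1 / β) * ψw) :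
    (0 < ψstar) ∧
    (Real.log ψstar = -(1 / β) * Real.log (α - 1) + Real.log ψw) ∧
    (∀ ψ : ℝ, 0 < ψ → ψ ≠ ψstar → f ψstar < f ψ) := by
  have hα1 : 0 < α - 1 := by linarith
  have hα0 : 0 < α := by linarith
  have hstar_pos : 0 < ψstar := hψstar ▸ by positivity
  have hw : ψw ^ β = (α - 1) * ψstar ^ β := by
    rw [hψstar, rpow_neg_one_div_mul_rpow hα1 hψw.le hβ.ne', mul_inv_cancel_left₀ hα1.ne']
  have hscaled : ∀ ψ, 0 < ψ → α * f ψ = α * log ((α - 1) * ψstar ^ β + ψ ^ β) - log (ψ ^ β) := by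
    intro ψ hψ
    rw [hf, ← hw, log_rpow hψ]
    field_simp
  refine ⟨hstar_pos, ?_, fun ψ hψ hne => ?_⟩
  · rw [hψstar, log_mul (rpow_pos_of_pos hα1 _).ne' hψw.ne', log_rpow hα1]
    ring
  · have hpow_ne : ψstar ^ β ≠ ψ ^ β :=
      fun h => hne ((rpow_left_inj hstar_pos.le hψ.le hβ.ne').1 h).symm
    have key := mul_log_mul_sub_log_lt hα (rpow_pos_of_pos hstar_pos β) (rpow_pos_of_pos hψ β)
      hpow_ne
    rw [← mul_lt_mul_iff_right₀ hα0, hscaled ψ hψ, hscaled ψstar hstar_pos]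
    rwa [show α * ψstar ^ β = (α - 1) * ψstar ^ β + ψstar ^ β by ring] at key
end

section
/- Let n > 2 be a natural number and c > 0 a real number. Define f : ℝ → ℝ by f(γ) = ∑_{i=1}^{n−1} (n − i)·(i·γ − c)². Then f has a unique global minimizer at γ* = 2c/n, and the resulting maximal implicit-reward spread satisfies (n − 1)·γ* = 2·c·(n−1)/n < (n − 1)·c. In particular, with c = τ⁻¹, the spread ψ^{(D̄)}_∞ = 2·(n−1)/n·τ⁻¹ obtained from the transitive closure dataset is strictly smaller than the spread ψ^{(D)}_∞ = (n−1)·τ⁻¹ obtained from the chain dataset, for which the IPO objective can be minimized at zero with every adjacent pair separated by exactly τ⁻¹. -/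
lemma sum_aux0 (a : ℝ) (m : ℕ) :
    ∑ i ∈ Finset.Icc 1 m, (a - (i : ℝ)) = a * m - m * (m + 1) / 2 := by
  induction m with
  | zero => simp
  | succ k ih =>
    rw [Finset.sum_Icc_succ_top (by omega : 1 ≤ k + 1), ih]
    push_cast; ring

lemma sum_aux1 (a : ℝ) (m : ℕ) :
    ∑ i ∈ Finset.Icc 1 m, (a - (i : ℝ)) * (i : ℝ) =
      a * (m * (m + 1) / 2) - m * (m + 1) * (2 * m + 1) / 6 := by
  induction m with
  | zero => simp
  | succ k ih =>
    rw [Finset.sum_Icc_succ_top (by omega : 1 ≤ k + 1), ih]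
    push_cast; ring

lemma sum_aux2 (a : ℝ) (m : ℕ) :
    ∑ i ∈ Finset.Icc 1 m, (a - (i : ℝ)) * (i : ℝ) ^ 2 =
      a * (m * (m + 1) * (2 * m + 1) / 6) - (m * (m + 1) / 2) ^ 2 := by
  induction m with
  | zero => simp
  | succ k ih =>
    rw [Finset.sum_Icc_succ_top (by omega : 1 ≤ k + 1), ih]
    push_cast; ring

/-- Proposition 7 (IPO on the transitive closure): for n > 2 and c = τ⁻¹ > 0,
the objective f(γ) = ∑_{i=1}^{n−1} (n − i)(iγ − c)² has the unique global
minimizer γ* = 2c/n, and the resulting spread (n−1)γ* = 2c(n−1)/n is strictly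
smaller than the spread (n−1)c obtained from the chain dataset. -/
theorem ipo_transitive_closure_spread (n : ℕ) (hn : 2 < n) (c : ℝ) (hc : 0 < c)
    (f : ℝ → ℝ)
    (hf : ∀ γ : ℝ, f γ = ∑ i ∈ Finset.Icc 1 (n - 1), ((n : ℝ) - (i : ℝ)) * ((i : ℝ) * γ - c) ^ 2) :
    (∀ γ : ℝ, γ ≠ 2 * c / n → f (2 * c / n) < f γ) ∧
    ((n : ℝ) - 1) * (2 * c / n) = 2 * c * ((n : ℝ) - 1) / n ∧
    2 * c * ((n : ℝ) - 1) / n < ((n : ℝ) - 1) * c := by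
  have hN : (2 : ℝ) < (n : ℝ) := by exact_mod_cast hn
  have hN0 : (n : ℝ) ≠ 0 := by linarith
  have hm : ((n - 1 : ℕ) : ℝ) = (n : ℝ) - 1 := by
    have : 1 ≤ n := by omega
    push_cast [this]; ring
  set N : ℝ := (n : ℝ) with hNdef
  have hF : ∀ γ : ℝ, f γ =
      (N ^ 2 * (N - 1) * (N + 1) / 12) * γ ^ 2
        - 2 * c * (N * (N - 1) * (N + 1) / 6) * γ
        + c ^ 2 * (N * (N - 1) / 2) := by
    intro γ
    rw [hf]
    have e : ∀ i ∈ Finset.Icc 1 (n - 1),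
        (N - (i : ℝ)) * ((i : ℝ) * γ - c) ^ 2 =
        ((N - (i : ℝ)) * (i : ℝ) ^ 2) * γ ^ 2
          + ((N - (i : ℝ)) * (i : ℝ)) * (-2 * c * γ)
          + (N - (i : ℝ)) * c ^ 2 := by
      intro i _; ring
    rw [Finset.sum_congr rfl e, Finset.sum_add_distrib, Finset.sum_add_distrib,
      ← Finset.sum_mul, ← Finset.sum_mul, ← Finset.sum_mul,
      sum_aux0, sum_aux1, sum_aux2, hm]
    ring
  have key : ∀ γ : ℝ, f γ - f (2 * c / N) =
      (N ^ 2 * (N - 1) * (N + 1) / 12) * (γ - 2 * c / N) ^ 2 := by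
    intro γ
    rw [hF, hF]
    field_simp
    ring
  refine ⟨?_, by ring, ?_⟩
  · intro γ hγ
    have hne : γ - 2 * c / N ≠ 0 := sub_ne_zero.mpr hγ
    have hsq : 0 < (γ - 2 * c / N) ^ 2 := by positivity
    have hA : 0 < N ^ 2 * (N - 1) * (N + 1) / 12 := by
      have h3 : 0 < N ^ 2 := by positivity
      have := mul_pos (mul_pos h3 (show (0:ℝ) < N - 1 by linarith))
        (show (0:ℝ) < N + 1 by linarith)
      linarith
    have := key γ
    nlinarith
  · rw [div_lt_iff₀ (by linarith : (0:ℝ) < N)]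
    nlinarith [mul_pos (mul_pos hc (show (0:ℝ) < N - 1 by linarith))
      (show (0:ℝ) < N - 2 by linarith)]
end
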